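/- arXiv:2103.16035 — 2 statements merged into one kernel-verified Lean document; each statement's English description precedes it below -/
import Mathlib

section
/- Let Σ be a symmetric positive definite p×p matrix and θ > 0. The map η_θ(v) = argmin_{β} { (1/2)(β−v)ᵀΣ(β−v) + θ‖β‖₁ } is well-defined (the minimizer exists and is unique) and is Lipschitz continuous in v with Lipschitz constant at most κ(Σ)^{1/2} = (λ_max(Σ)/λ_min(Σ))^{1/2} (in particular, it is Lipschitz). -/
/-!
`η_θ v` is the proximal point of the convex function `θ‖·‖₁` at `v` in the metric
`⟨x, y⟩_Σ = xᵀΣy`. If `b` minimizes the objective for `v`, convexity along the segment from `b`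
to any `c` shows that the objective grows by at least `½‖c - b‖²_Σ` at `c`. This gives
uniqueness, and adding the inequalities for two data `v, w` gives firm nonexpansiveness
`‖η v - η w‖²_Σ ≤ ⟨η v - η w, v - w⟩_Σ`, hence `‖η v - η w‖_Σ ≤ ‖v - w‖_Σ`; comparing the
`Σ`-norm with the Euclidean norm through `λ_min` and `λ_max` yields the constant.
Existence follows from the coercivity of the `ℓ¹` term.
-/

open Matrix Filter Set

theorem nonneg_of_forall_mul_add_sq_mul_nonneg {a d : ℝ}
    (h : ∀ t : ℝ, 0 < t → t ≤ 1 → 0 ≤ t * a + t ^ 2 * d) : 0 ≤ a := by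
  have hlim : Tendsto (fun t : ℝ => a + t * d) (nhdsWithin 0 (Ioi 0)) (nhds a) := by
    have : Tendsto (fun t : ℝ => a + t * d) (nhds 0) (nhds (a + 0 * d)) :=
      tendsto_const_nhds.add (tendsto_id.mul_const d)
    simpa using this.mono_left nhdsWithin_le_nhds
  refine ge_of_tendsto hlim ?_
  filter_upwards [Ioc_mem_nhdsGT one_pos] with t ⟨ht0, ht1⟩
  have := h t ht0 ht1
  nlinarith

section

variable {n : Type*}

theorem Matrix.PosSemidef.isSymm {S : Matrix n n ℝ} (hS : S.PosSemidef) : S.IsSymm :=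
  isHermitian_iff_isSymm.mp hS.isHermitian

variable [Fintype n]

theorem convexOn_sum_abs : ConvexOn ℝ univ (fun β : n → ℝ => ∑ j, |β j|) := by
  refine ⟨convex_univ, fun x _ y _ a b ha hb _ => ?_⟩
  simp only [Pi.add_apply, Pi.smul_apply, smul_eq_mul, Finset.mul_sum, ← Finset.sum_add_distrib]
  gcongr with j
  exact (abs_add_le _ _).trans_eq (by rw [abs_mul, abs_mul, abs_of_nonneg ha, abs_of_nonneg hb])

theorem tendsto_sum_abs_cocompact_atTop :
    Tendsto (fun β : n → ℝ => ∑ j, |β j|) (cocompact _) atTop :=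
  tendsto_atTop_mono (fun β => (pi_norm_le_iff_of_nonneg (by positivity)).2 fun i =>
    Finset.single_le_sum (f := fun j => |β j|) (fun j _ => abs_nonneg _) (Finset.mem_univ i))
    tendsto_norm_cocompact_atTop

namespace Matrix

variable {S : Matrix n n ℝ}

theorem IsSymm.dotProduct_mulVec_comm (hS : S.IsSymm) (x y : n → ℝ) :
    x ⬝ᵥ S *ᵥ y = y ⬝ᵥ S *ᵥ x := by
  rw [dotProduct_mulVec, ← mulVec_transpose, hS.eq, dotProduct_comm]

theorem IsSymm.add_dotProduct_mulVec_add (hS : S.IsSymm) (x y : n → ℝ) :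
    (x + y) ⬝ᵥ S *ᵥ (x + y) = x ⬝ᵥ S *ᵥ x + 2 * (x ⬝ᵥ S *ᵥ y) + y ⬝ᵥ S *ᵥ y := by
  rw [mulVec_add, dotProduct_add, add_dotProduct, add_dotProduct, hS.dotProduct_mulVec_comm y x]
  ring

theorem PosSemidef.dotProduct_mulVec_self_nonneg (hS : S.PosSemidef) (x : n → ℝ) :
    0 ≤ x ⬝ᵥ S *ᵥ x := by
  simpa using hS.dotProduct_mulVec_nonneg x

end Matrix

noncomputable def proxObjective (S : Matrix n n ℝ) (g : (n → ℝ) → ℝ) (v β : n → ℝ) : ℝ :=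
  1 / 2 * ((β - v) ⬝ᵥ S *ᵥ (β - v)) + g β

variable {S : Matrix n n ℝ} {g : (n → ℝ) → ℝ}

theorem exists_isMinOn_proxObjective (hS : S.PosSemidef) (hg : Continuous g)
    (hg_coercive : Tendsto g (cocompact _) atTop) (v : n → ℝ) :
    ∃ b, IsMinOn (proxObjective S g v) univ b := by
  have hcont : Continuous (proxObjective S g v) := by
    unfold proxObjective; fun_prop
  have hcoercive : Tendsto (proxObjective S g v) (cocompact _) atTop :=
    tendsto_atTop_mono (fun β => le_add_of_nonneg_left <|
      mul_nonneg (by norm_num) (hS.dotProduct_mulVec_self_nonneg _)) hg_coercive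
  obtain ⟨b, hb⟩ := hcont.exists_forall_le hcoercive
  exact ⟨b, fun β _ => hb β⟩

theorem proxObjective_add_le_of_isMinOn (hS : S.IsSymm) (hg : ConvexOn ℝ univ g) {v b : n → ℝ}
    (hb : IsMinOn (proxObjective S g v) univ b) (c : n → ℝ) :
    proxObjective S g v b + 1 / 2 * ((c - b) ⬝ᵥ S *ᵥ (c - b)) ≤ proxObjective S g v c := by
  set A := (b - v) ⬝ᵥ S *ᵥ (c - b) + (g c - g b)
  set D := (c - b) ⬝ᵥ S *ᵥ (c - b)
  have hc : proxObjective S g v c = proxObjective S g v b + A + 1 / 2 * D := by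
    simp only [proxObjective, A, D]
    rw [show c - v = (b - v) + (c - b) by abel, hS.add_dotProduct_mulVec_add]
    ring
  -- `A` bounds the one-sided directional derivative at `b` towards `c`, so `A ≥ 0` by minimality
  have hA : 0 ≤ A := by
    refine nonneg_of_forall_mul_add_sq_mul_nonneg (d := 1 / 2 * D) fun t ht0 ht1 => ?_
    have hmin := isMinOn_iff.mp hb ((1 - t) • b + t • c) (mem_univ _)
    have hconv := hg.2 (mem_univ b) (mem_univ c) (sub_nonneg.2 ht1) ht0.le (sub_add_cancel 1 t)
    have hquad : ((1 - t) • b + t • c - v) ⬝ᵥ S *ᵥ ((1 - t) • b + t • c - v) =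
        (b - v) ⬝ᵥ S *ᵥ (b - v) + 2 * t * ((b - v) ⬝ᵥ S *ᵥ (c - b)) + t ^ 2 * D := by
      rw [show (1 - t) • b + t • c - v = (b - v) + t • (c - b) by module,
        hS.add_dotProduct_mulVec_add, mulVec_smul, dotProduct_smul, smul_dotProduct,
        dotProduct_smul]
      simp only [smul_eq_mul, D]
      ring
    simp only [proxObjective, hquad, smul_eq_mul] at hmin hconv
    nlinarith
  linarith

theorem eq_of_isMinOn_proxObjective (hS : S.PosDef) (hg : ConvexOn ℝ univ g) {v b c : n → ℝ}
    (hb : IsMinOn (proxObjective S g v) univ b) (hc : IsMinOn (proxObjective S g v) univ c) :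
    b = c := by
  have hgrowth := proxObjective_add_le_of_isMinOn hS.posSemidef.isSymm hg hb c
  have hle := isMinOn_iff.mp hc b (mem_univ _)
  by_contra hne
  have hpos : 0 < (c - b) ⬝ᵥ S *ᵥ (c - b) := by
    simpa using hS.dotProduct_mulVec_pos (sub_ne_zero.2 (Ne.symm hne))
  linarith

theorem firmlyNonexpansive_of_isMinOn_proxObjective (hS : S.IsSymm)
    (hg : ConvexOn ℝ univ g) {v w b c : n → ℝ}
    (hb : IsMinOn (proxObjective S g v) univ b) (hc : IsMinOn (proxObjective S g w) univ c) :
    (b - c) ⬝ᵥ S *ᵥ (b - c) ≤ (b - c) ⬝ᵥ S *ᵥ (v - w) := by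
  have hbc := proxObjective_add_le_of_isMinOn hS hg hb c
  -- the `g` terms cancel when the two growth bounds are added
  have hcb := proxObjective_add_le_of_isMinOn hS hg hc b
  simp only [proxObjective] at hbc hcb
  rw [show c - b = -(b - c) by abel] at hbc
  simp only [mulVec_sub, mulVec_neg, dotProduct_sub, sub_dotProduct, dotProduct_neg,
    neg_dotProduct] at hbc hcb ⊢
  simp only [hS.dotProduct_mulVec_comm c b, hS.dotProduct_mulVec_comm v b,
    hS.dotProduct_mulVec_comm w b, hS.dotProduct_mulVec_comm v c,
    hS.dotProduct_mulVec_comm w c] at hbc hcb ⊢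
  linarith

theorem nonexpansive_of_isMinOn_proxObjective (hS : S.PosSemidef)
    (hg : ConvexOn ℝ univ g) {v w b c : n → ℝ}
    (hb : IsMinOn (proxObjective S g v) univ b) (hc : IsMinOn (proxObjective S g w) univ c) :
    (b - c) ⬝ᵥ S *ᵥ (b - c) ≤ (v - w) ⬝ᵥ S *ᵥ (v - w) := by
  have hfirm := firmlyNonexpansive_of_isMinOn_proxObjective hS.isSymm hg hb hc
  have hsq := hS.dotProduct_mulVec_self_nonneg ((v - w) - (b - c))
  rw [sub_eq_add_neg, hS.isSymm.add_dotProduct_mulVec_add] at hsq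
  simp only [mulVec_neg, dotProduct_neg, neg_dotProduct, neg_neg,
    hS.isSymm.dotProduct_mulVec_comm (v - w)] at hsq
  linarith

end

/-- The generalized soft-thresholding operator `η_θ` is well defined (unique minimizer) and
Lipschitz with constant `√(λmax/λmin)` in the Euclidean norm. -/
theorem soft_thresholding_lipschitz {p : ℕ} (S : Matrix (Fin p) (Fin p) ℝ) (hS : S.PosDef)
    (θ lmin lmax : ℝ) (hθ : 0 < θ) (hlmin : 0 < lmin)
    (hbound : ∀ x : Fin p → ℝ,
      lmin * (∑ j, x j ^ 2) ≤ x ⬝ᵥ S.mulVec x ∧ x ⬝ᵥ S.mulVec x ≤ lmax * (∑ j, x j ^ 2)) :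
    ∃ η : (Fin p → ℝ) → (Fin p → ℝ),
      (∀ v, IsMinOn (fun β : Fin p → ℝ =>
          (1/2) * ((β - v) ⬝ᵥ S.mulVec (β - v)) + θ * ∑ j, |β j|) Set.univ (η v)) ∧
      (∀ v b, IsMinOn (fun β : Fin p → ℝ =>
          (1/2) * ((β - v) ⬝ᵥ S.mulVec (β - v)) + θ * ∑ j, |β j|) Set.univ b → b = η v) ∧
      (∀ v w, Real.sqrt (∑ j, (η v j - η w j)^2) ≤
          Real.sqrt (lmax / lmin) * Real.sqrt (∑ j, (v j - w j)^2)) := by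
  set g : (Fin p → ℝ) → ℝ := fun β => θ * ∑ j, |β j|
  have hg : ConvexOn ℝ univ g := convexOn_sum_abs.smul hθ.le
  choose η hη using exists_isMinOn_proxObjective hS.posSemidef (g := g) (by fun_prop)
    (tendsto_sum_abs_cocompact_atTop.const_mul_atTop hθ)
  refine ⟨η, hη, fun v b hb => eq_of_isMinOn_proxObjective hS hg hb (hη v), fun v w => ?_⟩
  have hQ := nonexpansive_of_isMinOn_proxObjective hS.posSemidef hg (hη v) (hη w)
  have hlower := (hbound (η v - η w)).1
  have hupper := (hbound (v - w)).2
  have hsq : ∑ j, (η v j - η w j) ^ 2 ≤ lmax / lmin * ∑ j, (v j - w j) ^ 2 := by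
    rw [div_mul_eq_mul_div, le_div_iff₀ hlmin]
    simp only [Pi.sub_apply] at hlower hupper
    linarith
  calc √(∑ j, (η v j - η w j) ^ 2) ≤ √(lmax / lmin * ∑ j, (v j - w j) ^ 2) :=
        Real.sqrt_le_sqrt hsq
    _ = √(lmax / lmin) * √(∑ j, (v j - w j) ^ 2) := Real.sqrt_mul' _ (by positivity)
end

section
/- Let β⋆ ∈ ℝ^p, X ∈ ℝ^{n×p}, y ∈ ℝ^n, λ > 0, θ > 0, ω ∈ ℝ with λ = θ(1−ω). Suppose there exists v ∈ ∂‖β⋆‖₁ (the subdifferential of the ℓ¹ norm at β⋆) such that Xᵀz⋆ = θ·v where (1−ω)·z⋆ = y − X·β⋆. Then β⋆ is a global minimizer of the LASSO cost C(β) = (1/2)‖y − Xβ‖² + λ‖β‖₁. -/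
/-!
Write `r = y - X β⋆`. The hypotheses give `Xᵀ r = (1 - ω) θ v = λ v`, so `λ v` is the gradient
of `-½‖y - X·‖²` at `β⋆`. Convexity of the quadratic gives
`½‖r‖² ≤ ½‖y - Xβ‖² + λ ⟪v, β - β⋆⟫`, and `v ∈ ∂‖β⋆‖₁` gives
`‖β⋆‖₁ + ⟪v, β - β⋆⟫ ≤ ‖β‖₁`; multiplying the latter by `λ ≥ 0` and adding yields the claim.
-/

open Matrix

theorem Real.sign_mul_self (r : ℝ) : Real.sign r * r = |r| := by
  rcases lt_trichotomy r 0 with hr | rfl | hr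
  · rw [Real.sign_of_neg hr, abs_of_neg hr, neg_one_mul]
  · simp
  · rw [Real.sign_of_pos hr, abs_of_pos hr, one_mul]

theorem abs_add_mul_sub_le_abs {x s : ℝ} (hsign : x ≠ 0 → s = Real.sign x) (hs : |s| ≤ 1)
    (b : ℝ) : |x| + s * (b - x) ≤ |b| := by
  have hsx : s * x = |x| := by
    rcases eq_or_ne x 0 with rfl | hx
    · simp
    · rw [hsign hx, Real.sign_mul_self]
  have hsb : s * b ≤ |b| :=
    calc s * b ≤ |s| * |b| := (le_abs_self _).trans (abs_mul s b).le
      _ ≤ |b| := mul_le_of_le_one_left (abs_nonneg b) hs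
  linarith [mul_sub s b x]

theorem sum_abs_add_dotProduct_sub_le {ι : Type*} [Fintype ι] {x v : ι → ℝ}
    (hv : ∀ j, (x j ≠ 0 → v j = Real.sign (x j)) ∧ |v j| ≤ 1) (b : ι → ℝ) :
    ∑ j, |x j| + v ⬝ᵥ (b - x) ≤ ∑ j, |b j| := by
  simp only [dotProduct, Pi.sub_apply, ← Finset.sum_add_distrib]
  exact Finset.sum_le_sum fun j _ => abs_add_mul_sub_le_abs (hv j).1 (hv j).2 (b j)

theorem sum_sq_sub_mulVec_le {m k R : Type*} [Fintype m] [Fintype k]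
    [CommRing R] [LinearOrder R] [IsStrictOrderedRing R]
    (X : Matrix m k R) (y : m → R) (b₀ b : k → R) :
    ∑ i, (y i - (X *ᵥ b₀) i) ^ 2 ≤
      ∑ i, (y i - (X *ᵥ b) i) ^ 2 + 2 * ((Xᵀ *ᵥ (y - X *ᵥ b₀)) ⬝ᵥ (b - b₀)) := by
  set r := y - X *ᵥ b₀
  set d := X *ᵥ (b - b₀)
  have hres : y - X *ᵥ b = r - d := by
    simp only [r, d, mulVec_sub]; abel
  have hcross : (Xᵀ *ᵥ r) ⬝ᵥ (b - b₀) = r ⬝ᵥ d := by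
    rw [mulVec_transpose, dotProduct_mulVec]
  have hsq (u : m → R) : ∑ i, u i ^ 2 = u ⬝ᵥ u := by
    simp only [dotProduct, sq]
  change ∑ i, r i ^ 2 ≤ ∑ i, (y - X *ᵥ b) i ^ 2 + _
  rw [hres, hcross, hsq, hsq]
  simp only [sub_dotProduct, dotProduct_sub, dotProduct_comm d r]
  linarith [hsq d ▸ Finset.sum_nonneg fun i _ => sq_nonneg (d i)]

theorem amp_fixed_point_is_lasso_minimizer_general {n p : ℕ}
    (X : Matrix (Fin n) (Fin p) ℝ) (y : Fin n → ℝ)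
    (βs : Fin p → ℝ) (zs : Fin n → ℝ) (v : Fin p → ℝ)
    (lam θ ω : ℝ) (hlam : 0 < lam) (hcal : lam = θ * (1 - ω))
    (hv : ∀ j, (βs j ≠ 0 → v j = Real.sign (βs j)) ∧ |v j| ≤ 1)
    (hz : (1 - ω) • zs = y - X.mulVec βs)
    (hkkt : Xᵀ.mulVec zs = θ • v) :
    ∀ β : Fin p → ℝ,
      (1/2) * (∑ i, (y i - X.mulVec βs i)^2) + lam * ∑ j, |βs j| ≤
      (1/2) * (∑ i, (y i - X.mulVec β i)^2) + lam * ∑ j, |β j| := by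
  intro β
  have hgrad : Xᵀ *ᵥ (y - X *ᵥ βs) = lam • v := by
    rw [← hz, mulVec_smul, hkkt, smul_smul, hcal, mul_comm]
  have hquad := sum_sq_sub_mulVec_le X y βs β
  have hl1 := mul_le_mul_of_nonneg_left (sum_abs_add_dotProduct_sub_le hv β) hlam.le
  rw [hgrad, smul_dotProduct, smul_eq_mul] at hquad
  linarith

/-- Any AMP fixed point with the subgradient certificate is a global LASSO minimizer
with calibrated `λ = θ(1-ω)`. -/
theorem amp_fixed_point_is_lasso_minimizer {n p : ℕ}
    (X : Matrix (Fin n) (Fin p) ℝ) (y : Fin n → ℝ)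
    (βs : Fin p → ℝ) (zs : Fin n → ℝ) (v : Fin p → ℝ)
    (lam θ ω : ℝ) (hlam : 0 < lam) (hθ : 0 < θ) (hcal : lam = θ * (1 - ω))
    (hv : ∀ j, (βs j ≠ 0 → v j = Real.sign (βs j)) ∧ |v j| ≤ 1)
    (hz : (1 - ω) • zs = y - X.mulVec βs)
    (hkkt : Xᵀ.mulVec zs = θ • v) :
    ∀ β : Fin p → ℝ,
      (1/2) * (∑ i, (y i - X.mulVec βs i)^2) + lam * ∑ j, |βs j| ≤
      (1/2) * (∑ i, (y i - X.mulVec β i)^2) + lam * ∑ j, |β j| :=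
  amp_fixed_point_is_lasso_minimizer_general X y βs zs v lam θ ω hlam hcal hv hz hkkt
end
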